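/- arXiv:cs/0506008 — 2 statements merged into one kernel-verified Lean document; each statement's English description precedes it below -/
import Mathlib

section
/- Let t ⋈ c be a normalized (in)equation with ⋈ ∈ {=,≠,<,≤,>,≥}. If m is small and n is large, then the DFA A^{t⋈c}_{(m,n)} represents the set {a ∈ ℤ^r : t[a] ⋈ c}, and A^{t⋈c}_{(m,n)} has exactly 2 + n − m states. -/
namespace Presburger

/-- A letter of the alphabet `Σ^r`, where `Σ = {0, …, ρ-1}`. -/
abbrev Letter (ρ r : ℕ) := Fin r → Fin ρ

/-- The natural number encoded by a word over `Σ` (most significant digit first). -/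
def natVal (ρ : ℕ) (w : List ℕ) : ℕ := w.foldl (fun acc b => ρ * acc + b) 0

/-- The integer encoded by a nonempty word over `Σ` (ρ's complement,
most significant digit first); the empty word gets the junk value `0`. -/
def intVal (ρ : ℕ) : List ℕ → ℤ
  | [] => 0
  | b :: u => (natVal ρ u : ℤ) - (if b = 0 then 0 else (ρ : ℤ) ^ u.length)

/-- The tuple of natural numbers encoded track-wise by a word over `Σ^r` (as integers). -/
def natVec (ρ r : ℕ) (w : List (Letter ρ r)) : Fin r → ℤ :=
  fun i => (natVal ρ (w.map fun b => (b i : ℕ)) : ℤ)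

/-- The tuple of integers encoded track-wise by a nonempty word over `Σ^r`. -/
def intVec (ρ r : ℕ) (w : List (Letter ρ r)) : Fin r → ℤ :=
  fun i => intVal ρ (w.map fun b => (b i : ℕ))

/-- A language over `Σ^r` represents a set `U ⊆ ℤ^r` if it consists exactly of the
nonempty words encoding a member of `U`. -/
def Represents (ρ r : ℕ) (L : Language (Letter ρ r)) (U : Set (Fin r → ℤ)) : Prop :=
  ∀ w : List (Letter ρ r), w ∈ L ↔ (w ≠ [] ∧ intVec ρ r w ∈ U)

/-- A DFA represents `U ⊆ ℤ^r` if its accepted language does. -/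
def DFARepresents (ρ r : ℕ) {σ : Type*} (M : DFA (Letter ρ r) σ) (U : Set (Fin r → ℤ)) : Prop :=
  Represents ρ r M.accepts U

/-- Value of the homogeneous term with coefficients `k` at the point `a`. -/
def tval {r : ℕ} (k : Fin r → ℤ) (a : Fin r → ℤ) : ℤ := ∑ i, k i * a i

/-- A homogeneous term is `0` or has all its coefficients nonzero. -/
def Homog {r : ℕ} (k : Fin r → ℤ) : Prop := k = 0 ∨ ∀ i, k i ≠ 0

/-- `σ(b)`: componentwise `0` if the digit is `0` and `-1` otherwise. -/
def sgnLetter {ρ r : ℕ} (b : Letter ρ r) : Fin r → ℤ :=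
  fun i => if (b i : ℕ) = 0 then 0 else -1

/-- The letter `b` viewed as a tuple of integers. -/
def letterInt {ρ r : ℕ} (b : Letter ρ r) : Fin r → ℤ := fun i => ((b i : ℕ) : ℤ)

/-- `‖t‖⁺`: the sum of the positive coefficients of `t`. -/
def posNorm {r : ℕ} (k : Fin r → ℤ) : ℤ := ∑ i, max (k i) 0

/-- `‖t‖⁻`: the sum of the absolute values of the negative coefficients of `t`. -/
def negNorm {r : ℕ} (k : Fin r → ℤ) : ℤ := ∑ i, max (-k i) 0

/-- `gcd(t)`: the gcd of the absolute values of the coefficients of `t`. -/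
def gcdT {r : ℕ} (k : Fin r → ℤ) : ℕ := Finset.univ.gcd fun i => (k i).natAbs

/-- The transition function `η` of the infinite-state automaton for `t`,
restricted to the integer states: `η(q, b) = ρ·q + t[b]`. -/
def etaStep (ρ : ℕ) {r : ℕ} (k : Fin r → ℤ) (q : ℤ) (b : Letter ρ r) : ℤ :=
  ρ * q + tval k (letterInt b)

/-- The transition of `η` out of the initial state: `η(q_I, b) = t[σ(b)]`. -/
def etaInit (ρ : ℕ) {r : ℕ} (k : Fin r → ℤ) (b : Letter ρ r) : ℤ :=
  tval k (sgnLetter b)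

/-- A state `q` is small (for `t ⋈ c`) if `q < min{c, -‖t‖⁺}`. -/
def IsSmall {r : ℕ} (k : Fin r → ℤ) (c q : ℤ) : Prop := q < min c (-posNorm k)

/-- A state `q` is large (for `t ⋈ c`) if `q > max{c, ‖t‖⁻}`. -/
def IsLarge {r : ℕ} (k : Fin r → ℤ) (c q : ℤ) : Prop := max c (negNorm k) < q

/-- The six relations `=, ≠, <, ≤, >, ≥` on `ℤ`. -/
def rel6 : Set (ℤ → ℤ → Prop) :=
  {fun x y => x = y, fun x y => x ≠ y, fun x y => x < y,
   fun x y => x ≤ y, fun x y => x > y, fun x y => x ≥ y}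

/-- Clamp an integer into the state set `{m, …, n}`; yields `none` (the initial state)
only in the degenerate case `m > n`, which never occurs for small `m` and large `n`. -/
noncomputable def clampSt (m n x : ℤ) : Option ↥(Finset.Icc m n) :=
  if h : max m (min n x) ∈ Finset.Icc m n then some ⟨max m (min n x), h⟩ else none

/-- The DFA `A^{t ⋈ c}_{(m,n)}` for the (in)equation `t ⋈ c`: states are
`q_I = none` together with `{m, …, n}`, transitions clamp `η` to `[m, n]`, and the
accepting states are the integer states `q` with `q ⋈ c`. -/
noncomputable def ineqDFA (ρ : ℕ) {r : ℕ} (k : Fin r → ℤ) (m n : ℤ) (rel : ℤ → ℤ → Prop) (c : ℤ) :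
    DFA (Letter ρ r) (Option ↥(Finset.Icc m n)) where
  step q b :=
    match q with
    | none => clampSt m n (etaInit ρ k b)
    | some z => clampSt m n (etaStep ρ k z.val b)
  start := none
  accept := {q | ∃ z : ↥(Finset.Icc m n), q = some z ∧ rel z.val c}

/-- Two states of a DFA are equivalent if they accept exactly the same words. -/
def stEquiv {α : Type*} {σ : Type*} (M : DFA α σ) (p q : σ) : Prop :=
  ∀ w : List α, (M.evalFrom p w ∈ M.accept ↔ M.evalFrom q w ∈ M.accept)

end Presburger

/-!
Reading a word most significant digit first, appending a letter `b` to a nonempty word `w`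
maps its value `t[⟨w⟩]` to `ρ · t[⟨w⟩] + t[b]`, i.e. exactly to `η(t[⟨w⟩], b)`; the first letter
gives `t[σ(b)] = η(q_I, b)`. So the unclamped run of the automaton computes `t[⟨w⟩]`.
Clamping into `[m, n]` does not disturb this: a small `m` satisfies `η(m, b) ≤ m` and a large
`n` satisfies `η(n, b) ≥ n`, so once the run leaves `[m, n]` on one side it stays there, and
since `m < c < n` the clamped value is in the same relation to `c` as the true one.
-/

namespace Presburger

section Encoding

variable {ρ r : ℕ}

lemma natVal_append_singleton (u : List ℕ) (d : ℕ) :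
    natVal ρ (u ++ [d]) = ρ * natVal ρ u + d := by
  simp [natVal, List.foldl_append]

lemma intVal_append_singleton {u : List ℕ} (hu : u ≠ []) (d : ℕ) :
    intVal ρ (u ++ [d]) = ρ * intVal ρ u + d := by
  obtain ⟨a, u, rfl⟩ := List.exists_cons_of_ne_nil hu
  simp only [List.cons_append, intVal, natVal_append_singleton, List.length_append,
    List.length_cons, List.length_nil]
  split <;> push_cast <;> ring

lemma intVec_singleton (b : Letter ρ r) : intVec ρ r [b] = sgnLetter b := by
  funext i
  simp only [intVec, List.map_cons, List.map_nil, intVal, natVal, sgnLetter, List.foldl_nil,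
    List.length_nil, pow_zero]
  split <;> simp

lemma intVec_append_singleton {w : List (Letter ρ r)} (hw : w ≠ []) (b : Letter ρ r) :
    intVec ρ r (w ++ [b]) = (ρ : ℤ) • intVec ρ r w + letterInt b := by
  funext i
  simpa [intVec, letterInt] using intVal_append_singleton (by simpa using hw) (b i : ℕ)

lemma letterInt_mem_Icc (b : Letter ρ r) (i : Fin r) : letterInt b i ∈ Set.Icc 0 ((ρ : ℤ) - 1) := by
  have := (b i).is_lt
  simp only [letterInt, Set.mem_Icc]
  omega

end Encoding

section Term

variable {r : ℕ}

lemma tval_eq_dotProduct (k a : Fin r → ℤ) : tval k a = k ⬝ᵥ a := rfl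

lemma tval_intVec_append_singleton {ρ : ℕ} (k : Fin r → ℤ) {w : List (Letter ρ r)} (hw : w ≠ [])
    (b : Letter ρ r) :
    tval k (intVec ρ r (w ++ [b])) = ρ * tval k (intVec ρ r w) + tval k (letterInt b) := by
  simp only [tval_eq_dotProduct, intVec_append_singleton hw, dotProduct_add, dotProduct_smul,
    smul_eq_mul]

lemma tval_le_mul_posNorm (k : Fin r → ℤ) {x : Fin r → ℤ} {B : ℤ} (hx : ∀ i, x i ∈ Set.Icc 0 B) :
    tval k x ≤ B * posNorm k := by
  rw [tval, posNorm, Finset.mul_sum]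
  refine Finset.sum_le_sum fun i _ => ?_
  obtain ⟨hx0, hxB⟩ := hx i
  rcases le_total (k i) 0 with hk | hk
  · rw [max_eq_right hk]
    nlinarith
  · rw [max_eq_left hk]
    nlinarith

lemma neg_mul_negNorm_le_tval (k : Fin r → ℤ) {x : Fin r → ℤ} {B : ℤ}
    (hx : ∀ i, x i ∈ Set.Icc 0 B) : -(B * negNorm k) ≤ tval k x := by
  have h := tval_le_mul_posNorm (-k) hx
  have hneg : posNorm (-k) = negNorm k := by simp [posNorm, negNorm]
  rw [hneg, tval_eq_dotProduct, neg_dotProduct, ← tval_eq_dotProduct] at h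
  linarith

end Term

section Clamp

lemma max_min_apply_max_min {α : Type*} [LinearOrder α] {f : α → α} (hf : Monotone f)
    {m n : α} (hmn : m ≤ n) (hfm : f m ≤ m) (hfn : n ≤ f n) (v : α) :
    max m (min n (f (max m (min n v)))) = max m (min n (f v)) := by
  rcases le_total v m with hv | hv
  · have hfv : f v ≤ m := (hf hv).trans hfm
    rw [min_eq_right (hv.trans hmn), max_eq_left hv, min_eq_right (hfm.trans hmn),
      max_eq_left hfm, min_eq_right (hfv.trans hmn), max_eq_left hfv]
  rcases le_total n v with hv' | hv'
  · have hfv : n ≤ f v := hfn.trans (hf hv')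
    rw [min_eq_left hv', max_eq_right hmn, min_eq_left hfn, min_eq_left hfv]
  · rw [min_eq_right hv', max_eq_right hv]

lemma rel_max_min_iff {rel : ℤ → ℤ → Prop} (hrel : rel ∈ rel6) {m n c : ℤ} (hmc : m < c)
    (hcn : c < n) (v : ℤ) : rel (max m (min n v)) c ↔ rel v c := by
  simp only [rel6, Set.mem_insert_iff, Set.mem_singleton_iff] at hrel
  rcases hrel with rfl | rfl | rfl | rfl | rfl | rfl <;> omega

lemma clampSt_eq {m n : ℤ} (hmn : m ≤ n) (x : ℤ) :
    clampSt m n x = some ⟨max m (min n x), by simp only [Finset.mem_Icc]; omega⟩ :=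
  dif_pos _

lemma clampSt_congr {m n x y : ℤ} (h : max m (min n x) = max m (min n y)) :
    clampSt m n x = clampSt m n y := by
  simp only [clampSt, h]

end Clamp

section Automaton

variable {ρ r : ℕ} {k : Fin r → ℤ} {m n : ℤ} {rel : ℤ → ℤ → Prop} {c : ℤ}

lemma ineqDFA_step_clampSt (hmn : m ≤ n) (x : ℤ) (b : Letter ρ r) :
    (ineqDFA ρ k m n rel c).step (clampSt m n x) b
      = clampSt m n (etaStep ρ k (max m (min n x)) b) := by
  rw [clampSt_eq hmn]
  rfl

lemma ineqDFA_clampSt_mem_accept (hmn : m ≤ n) (x : ℤ) :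
    clampSt m n x ∈ (ineqDFA ρ k m n rel c).accept ↔ rel (max m (min n x)) c := by
  rw [clampSt_eq hmn]
  simp [ineqDFA, hmn]

lemma clampSt_etaStep_max_min (hρ : 1 ≤ ρ) (hm : m ≤ -posNorm k) (hn : negNorm k ≤ n)
    (hmn : m ≤ n) (x : ℤ) (b : Letter ρ r) :
    clampSt m n (etaStep ρ k (max m (min n x)) b) = clampSt m n (etaStep ρ k x b) := by
  have hρ' : (1 : ℤ) ≤ ρ := by exact_mod_cast hρ
  have hup := tval_le_mul_posNorm k (letterInt_mem_Icc b)
  have hlow := neg_mul_negNorm_le_tval k (letterInt_mem_Icc b)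
  refine clampSt_congr (max_min_apply_max_min (f := fun q => etaStep ρ k q b) ?_ hmn ?_ ?_ x)
  · exact fun p q hpq => by simp only [etaStep]; nlinarith
  · simp only [etaStep]; nlinarith
  · simp only [etaStep]; nlinarith

theorem ineqDFA_eval (hρ : 1 ≤ ρ) (hm : m ≤ -posNorm k) (hn : negNorm k ≤ n) (hmn : m ≤ n)
    {w : List (Letter ρ r)} (hw : w ≠ []) :
    (ineqDFA ρ k m n rel c).eval w = clampSt m n (tval k (intVec ρ r w)) := by
  induction w using List.reverseRecOn with
  | nil => exact absurd rfl hw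
  | append_singleton w b ih =>
    rw [DFA.eval_append_singleton]
    rcases eq_or_ne w [] with rfl | hw'
    · rw [List.nil_append, intVec_singleton]
      rfl
    · rw [ih hw', ineqDFA_step_clampSt hmn, clampSt_etaStep_max_min hρ hm hn hmn,
        tval_intVec_append_singleton k hw', etaStep]

theorem ineqDFA_represents (hρ : 1 ≤ ρ) (hrel : rel ∈ rel6) (hm : IsSmall k c m)
    (hn : IsLarge k c n) :
    DFARepresents ρ r (ineqDFA ρ k m n rel c) {a | rel (tval k a) c} := by
  rw [IsSmall, lt_min_iff] at hm
  rw [IsLarge, max_lt_iff] at hn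
  have hmn : m ≤ n := by omega
  intro w
  rw [DFA.mem_accepts]
  rcases eq_or_ne w [] with rfl | hw
  · simp [ineqDFA]
  · rw [ineqDFA_eval hρ (by omega) (by omega) hmn hw, ineqDFA_clampSt_mem_accept hmn,
      rel_max_min_iff hrel hm.1 hn.1]
    simp [hw]

end Automaton

lemma card_option_Icc {m n : ℤ} (hmn : m ≤ n) :
    (Fintype.card (Option ↥(Finset.Icc m n)) : ℤ) = 2 + n - m := by
  rw [Fintype.card_option, Fintype.card_coe, Int.card_Icc]
  omega

theorem stmt_2_general (ρ r : ℕ) (hρ : 2 ≤ ρ) (k : Fin r → ℤ)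
    (rel : ℤ → ℤ → Prop) (hrel : rel ∈ rel6) (c m n : ℤ)
    (hm : IsSmall k c m) (hn : IsLarge k c n) :
    DFARepresents ρ r (ineqDFA ρ k m n rel c) {a | rel (tval k a) c} ∧
    (Fintype.card (Option ↥(Finset.Icc m n)) : ℤ) = 2 + n - m := by
  have hmn : m ≤ n := by
    rw [IsSmall, lt_min_iff] at hm
    rw [IsLarge, max_lt_iff] at hn
    omega
  exact ⟨ineqDFA_represents (by omega) hrel hm hn, card_option_Icc hmn⟩

/-- Lemma `bound_automata_(in)equation`.
If `m` is small and `n` is large, the DFA `A^{t ⋈ c}_{(m,n)}` represents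
`{a ∈ ℤ^r : t[a] ⋈ c}` and has exactly `2 + n - m` states. -/
theorem stmt_2 (ρ r : ℕ) (hρ : 2 ≤ ρ) (k : Fin r → ℤ) (hk : Homog k)
    (rel : ℤ → ℤ → Prop) (hrel : rel ∈ rel6) (c m n : ℤ)
    (hm : IsSmall k c m) (hn : IsLarge k c n) :
    DFARepresents ρ r (ineqDFA ρ k m n rel c) {a | rel (tval k a) c} ∧
    (Fintype.card (Option ↥(Finset.Icc m n)) : ℤ) = 2 + n - m :=
  stmt_2_general ρ r hρ k rel hrel c m n hm hn

end Presburger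
end

section
/- Let ρ ≥ 2 and m ≥ 0, and let MULT_m := {(a,b,c) ∈ ℤ³ : 0 ≤ a < ρ^m, 0 ≤ b < ρ^m, and a·b = c}. Every nondeterministic word automaton over the alphabet Σ³ whose accepted language represents MULT_m has at least ρ^m states. -/
namespace Presburger

/-- An NFA represents `U ⊆ ℤ^r` if its accepted language does. -/
def NFARepresents (ρ r : ℕ) {σ : Type*} (M : NFA (Letter ρ r) σ)
    (U : Set (Fin r → ℤ)) : Prop :=
  Represents ρ r M.accepts U

end Presburger

namespace Language

variable {α ι : Type*}

def IsFoolingSet (L : Language α) (u v : ι → List α) : Prop :=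
  (∀ i, u i ++ v i ∈ L) ∧ ∀ i j, u i ++ v j ∈ L → u j ++ v i ∈ L → i = j

end Language

namespace NFA

variable {α σ : Type*} (M : NFA α σ)

theorem append_mem_accepts_iff {u v : List α} :
    u ++ v ∈ M.accepts ↔ ∃ q ∈ M.eval u, v ∈ M.acceptsFrom {q} := by
  simp only [mem_accepts, evalFrom_append, mem_acceptsFrom]
  constructor
  · rintro ⟨f, hf, hfu⟩
    obtain ⟨q, hq, hfq⟩ := mem_evalFrom_iff_exists.1 hfu
    exact ⟨q, hq, f, hf, hfq⟩
  · rintro ⟨q, hq, f, hf, hfq⟩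
    exact ⟨f, hf, mem_evalFrom_iff_exists.2 ⟨q, hq, hfq⟩⟩

/-- A state reached by `u i` from which `v i` is accepted cannot serve a second pair. -/
theorem card_le_card_of_isFoolingSet {ι : Type*} [Fintype ι] [Fintype σ] {u v : ι → List α}
    (h : M.accepts.IsFoolingSet u v) : Fintype.card ι ≤ Fintype.card σ := by
  choose q hq hacc using fun i => M.append_mem_accepts_iff.1 (h.1 i)
  refine Fintype.card_le_of_injective q fun i j hij => h.2 i j ?_ ?_
  · exact M.append_mem_accepts_iff.2 ⟨q i, hq i, hij ▸ hacc j⟩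
  · exact M.append_mem_accepts_iff.2 ⟨q j, hq j, hij ▸ hacc i⟩

end NFA

namespace Presburger

def mult (ρ m : ℕ) : Set (Fin 3 → ℤ) :=
  {a | 0 ≤ a 0 ∧ a 0 < (ρ : ℤ) ^ m ∧ 0 ≤ a 1 ∧ a 1 < (ρ : ℤ) ^ m ∧
       a 0 * a 1 = a 2}

theorem natCast_mem_mult_iff {ρ m : ℕ} (x : Fin 3 → ℕ) :
    (fun i => (x i : ℤ)) ∈ mult ρ m ↔ x 0 < ρ ^ m ∧ x 1 < ρ ^ m ∧ x 0 * x 1 = x 2 := by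
  simp only [mult, Set.mem_ofPred_eq, Nat.cast_nonneg, true_and]
  norm_cast

section

variable {ρ : ℕ}

theorem foldl_eq_mul_pow_add_natVal (w : List ℕ) (a : ℕ) :
    w.foldl (fun acc b => ρ * acc + b) a = a * ρ ^ w.length + natVal ρ w := by
  induction w generalizing a with
  | nil => simp [natVal]
  | cons b u ih =>
    simp only [List.foldl_cons, List.length_cons, natVal]
    rw [ih, ih (ρ * 0 + b)]
    ring

theorem natVal_append (u v : List ℕ) :
    natVal ρ (u ++ v) = natVal ρ u * ρ ^ v.length + natVal ρ v := by
  rw [natVal, List.foldl_append, foldl_eq_mul_pow_add_natVal]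
  rfl

theorem natVec_append {r : ℕ} (u v : List (Letter ρ r)) (i : Fin r) :
    natVec ρ r (u ++ v) i = natVec ρ r u i * (ρ : ℤ) ^ v.length + natVec ρ r v i := by
  simp [natVec, natVal_append]

variable [NeZero ρ]

theorem intVec_zero_cons {r : ℕ} (w : List (Letter ρ r)) :
    intVec ρ r (0 :: w) = natVec ρ r w := by
  funext i
  simp [intVec, intVal, natVec]

variable (ρ) in
def digitWord {r : ℕ} : ℕ → (Fin r → ℕ) → List (Letter ρ r)
  | 0, _ => []
  | m + 1, n => digitWord m (fun i => n i / ρ) ++ [fun i => Fin.ofNat ρ (n i)]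

@[simp]
theorem length_digitWord {r : ℕ} (m : ℕ) (n : Fin r → ℕ) :
    (digitWord ρ m n).length = m := by
  induction m generalizing n with
  | zero => rfl
  | succ m ih => simp [digitWord, ih]

@[simp]
theorem natVec_digitWord {r : ℕ} (m : ℕ) (n : Fin r → ℕ) :
    natVec ρ r (digitWord ρ m n) = fun i => ((n i % ρ ^ m : ℕ) : ℤ) := by
  funext i
  induction m generalizing n with
  | zero => simp [digitWord, natVec, natVal]
  | succ m ih =>
    rw [digitWord, natVec_append, ih, pow_succ', Nat.mod_mul]
    simp only [natVec, List.map_cons, List.map_nil, natVal, List.foldl_cons, List.foldl_nil,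
      List.length_singleton, pow_one, mul_zero, zero_add, Fin.val_ofNat]
    push_cast
    ring

theorem natVec_digitWord_append_digitWord {r : ℕ} (m : ℕ) (p s : Fin r → ℕ) :
    natVec ρ r (digitWord ρ m p ++ digitWord ρ m s) =
      fun i => ((p i % ρ ^ m * ρ ^ m + s i % ρ ^ m : ℕ) : ℤ) := by
  funext i
  simp only [natVec_append, natVec_digitWord, length_digitWord]
  push_cast
  rfl

variable (ρ) in
def multPrefix (m : ℕ) : Option (Fin (ρ ^ m - 1)) → List (Letter ρ 3)
  | none => 0 :: digitWord ρ m ![1, 0, 0]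
  | some j => 0 :: digitWord ρ m ![0, 0, j]

variable (ρ) in
def multSuffix (m : ℕ) : Option (Fin (ρ ^ m - 1)) → List (Letter ρ 3)
  | none => []
  | some k => digitWord ρ m ![k + 1, ρ ^ m - 1, ρ ^ m - 1 - k]

variable {m : ℕ}

theorem natVec_mem_mult_none : natVec ρ 3 (digitWord ρ m ![1, 0, 0]) ∈ mult ρ m := by
  have hR : 0 < ρ ^ m := Nat.pos_of_neZero _
  rw [natVec_digitWord, natCast_mem_mult_iff]
  simp [Nat.mod_lt _ hR, hR]

theorem natVec_not_mem_mult_none_some (k : Fin (ρ ^ m - 1)) :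
    natVec ρ 3 (digitWord ρ m ![1, 0, 0] ++ digitWord ρ m ![k + 1, ρ ^ m - 1, ρ ^ m - 1 - k])
      ∉ mult ρ m := by
  have hk : (k : ℕ) + 1 < ρ ^ m := by omega
  rw [natVec_digitWord_append_digitWord, natCast_mem_mult_iff]
  simp [Nat.mod_eq_of_lt hk, Nat.mod_eq_of_lt (show 1 < ρ ^ m by omega)]

theorem natVec_mem_mult_some_some_iff (j k : Fin (ρ ^ m - 1)) :
    natVec ρ 3 (digitWord ρ m ![0, 0, j] ++ digitWord ρ m ![k + 1, ρ ^ m - 1, ρ ^ m - 1 - k])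
      ∈ mult ρ m ↔ j = k := by
  have hk : (k : ℕ) + 1 < ρ ^ m := by omega
  have hj : (j : ℕ) < ρ ^ m := by omega
  have hR : 0 < ρ ^ m := by omega
  have hprod : (k + 1) * (ρ ^ m - 1) = k * ρ ^ m + (ρ ^ m - 1 - k) := by
    zify [hR, hk.le, (by omega : (k : ℕ) ≤ ρ ^ m - 1)]
    ring
  rw [natVec_digitWord_append_digitWord, natCast_mem_mult_iff]
  simp [Nat.mod_eq_of_lt hk, Nat.mod_eq_of_lt hj,
    Nat.mod_eq_of_lt (by omega : ρ ^ m - 1 - k < ρ ^ m), hk, hR, hprod,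
    Nat.mul_left_inj hR.ne', Fin.ext_iff, eq_comm]

theorem zero_cons_mem_iff_natVec_mem_mult {L : Language (Letter ρ 3)}
    (hL : Represents ρ 3 L (mult ρ m)) (w : List (Letter ρ 3)) :
    0 :: w ∈ L ↔ natVec ρ 3 w ∈ mult ρ m := by
  rw [hL, intVec_zero_cons]
  simp

theorem isFoolingSet_multPrefix_multSuffix {L : Language (Letter ρ 3)}
    (hL : Represents ρ 3 L (mult ρ m)) :
    L.IsFoolingSet (multPrefix ρ m) (multSuffix ρ m) := by
  have hmem := zero_cons_mem_iff_natVec_mem_mult hL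
  refine ⟨fun i => ?_, fun i j hij hji => ?_⟩
  · cases i with
    | none =>
      rw [multSuffix, List.append_nil]
      exact (hmem _).2 natVec_mem_mult_none
    | some k => exact (hmem _).2 ((natVec_mem_mult_some_some_iff k k).2 rfl)
  · cases i with
    | none =>
      cases j with
      | none => rfl
      | some k => exact absurd ((hmem _).1 hij) (natVec_not_mem_mult_none_some k)
    | some k =>
      cases j with
      | none => exact absurd ((hmem _).1 hji) (natVec_not_mem_mult_none_some k)
      | some l => exact congrArg some ((natVec_mem_mult_some_some_iff k l).1 ((hmem _).1 hij))

end

/-- Remark after Theorem `worst_case`.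
Every nondeterministic word automaton over the alphabet `Σ³` representing
`MULT_m = {(a,b,c) ∈ ℤ³ : 0 ≤ a < ρ^m, 0 ≤ b < ρ^m, a·b = c}` has at least
`ρ^m` states. -/
theorem stmt_19 (ρ : ℕ) (hρ : 2 ≤ ρ) (m : ℕ)
    (σ : Type*) [Fintype σ] (M : NFA (Letter ρ 3) σ)
    (hM : NFARepresents ρ 3 M
      {a | 0 ≤ a 0 ∧ a 0 < (ρ : ℤ) ^ m ∧ 0 ≤ a 1 ∧ a 1 < (ρ : ℤ) ^ m ∧
           a 0 * a 1 = a 2}) :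
    ρ ^ m ≤ Fintype.card σ := by
  have : NeZero ρ := ⟨by omega⟩
  have hcard : Fintype.card (Option (Fin (ρ ^ m - 1))) = ρ ^ m := by
    have := Nat.pos_of_neZero (ρ ^ m)
    simp only [Fintype.card_option, Fintype.card_fin]
    omega
  exact hcard ▸ M.card_le_card_of_isFoolingSet (isFoolingSet_multPrefix_multSuffix hM)

end Presburger
end
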